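/- Fix an integer n ≥ 1 and λ > 0. Let G₁ and G₂ be independent, each distributed according to the gamma distribution with shape 1/n and scale λ. Then E|G₁ − G₂| = 2λ / B(1/2, 1/n), where B(x, y) = Γ(x)Γ(y)/Γ(x+y) is the beta function. -/

import Mathlib

/-!
By symmetry `E|X - Y| = 2 E (X - Y)⁺`. Substituting `y = x v` with `0 ≤ v < 1` in the inner
integral and exchanging the order of integration, the `x`-integral is a Gamma integral,
`∫ x^(2k) e^(-r(1+v)x) dx = Γ(2k+1) / (r(1+v))^(2k+1)`. What remains is
`∫₀¹ (1-v) v^(k-1) (1+v)^(-(2k+1)) dv = 4^(-k) / k`, since `v^k (1+v)^(-2k) / k` is an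
antiderivative. Legendre's duplication formula turns `Γ(2k+1) 4^(-k)` into
`k Γ(k) Γ(k+1/2) / √π`, so for shape `k` and rate `r` we get
`E|X - Y| = 2 Γ(k+1/2) / (√π Γ(k) r)`.
-/

open MeasureTheory ProbabilityTheory Real Set
open scoped ENNReal

lemma ENNReal.ofReal_abs_sub (x y : ℝ) :
    ENNReal.ofReal |x - y| = ENNReal.ofReal (x - y) + ENNReal.ofReal (y - x) := by
  rcases le_total y x with h | h
  · rw [abs_of_nonneg (sub_nonneg.2 h), ENNReal.ofReal_of_nonpos (sub_nonpos.2 h), add_zero]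
  · rw [abs_of_nonpos (sub_nonpos.2 h), ENNReal.ofReal_of_nonpos (sub_nonpos.2 h), zero_add,
      neg_sub]

lemma lintegral_prod_ofReal_abs_sub (μ : Measure ℝ) [SFinite μ] :
    ∫⁻ z, ENNReal.ofReal |z.1 - z.2| ∂μ.prod μ
      = 2 * ∫⁻ x, ∫⁻ y, ENNReal.ofReal (x - y) ∂μ ∂μ := by
  have hmeas : Measurable fun z : ℝ × ℝ => ENNReal.ofReal (z.1 - z.2) := by fun_prop
  simp_rw [ENNReal.ofReal_abs_sub]
  have hswap : ∫⁻ z, ENNReal.ofReal (z.2 - z.1) ∂μ.prod μ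
      = ∫⁻ z, ENNReal.ofReal (z.1 - z.2) ∂μ.prod μ :=
    lintegral_prod_swap (fun z : ℝ × ℝ => ENNReal.ofReal (z.1 - z.2))
  rw [lintegral_add_left hmeas, hswap, ← two_mul, lintegral_prod _ hmeas.aemeasurable]

lemma setLIntegral_Ico_zero_eq_setLIntegral_comp_mul {x : ℝ} (hx : 0 < x)
    (g : ℝ → ℝ≥0∞) :
    ∫⁻ y in Ico 0 x, g y = ∫⁻ v in Ico 0 1, ENNReal.ofReal x * g (x * v) := by
  have hImage : (x * ·) '' Ico 0 1 = Ico 0 x := by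
    rw [image_mul_left_Ico hx, mul_zero, mul_one]
  rw [← hImage, lintegral_image_eq_lintegral_abs_deriv_mul measurableSet_Ico
    (fun v _ => ((hasDerivAt_id' v).const_mul x).hasDerivWithinAt)
    (mul_right_injective₀ hx.ne').injOn, mul_one, abs_of_pos hx]

lemma lintegral_Ioo_ofReal_deriv_of_nonneg {g g' : ℝ → ℝ} {a b : ℝ} (hab : a ≤ b)
    (hcont : ContinuousOn g (Icc a b)) (hderiv : ∀ x ∈ Ioo a b, HasDerivAt g (g' x) x)
    (hpos : ∀ x ∈ Ioo a b, 0 ≤ g' x) :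
    ∫⁻ x in Ioo a b, ENNReal.ofReal (g' x) = ENNReal.ofReal (g b - g a) := by
  have hint : IntegrableOn g' (Ioc a b) :=
    intervalIntegral.integrableOn_deriv_of_nonneg hcont hderiv hpos
  rw [← ofReal_integral_eq_lintegral_ofReal (hint.mono_set Ioo_subset_Ioc_self)
      ((ae_restrict_iff' measurableSet_Ioo).2 (ae_of_all _ hpos)),
    ← integral_Ioc_eq_integral_Ioo, ← intervalIntegral.integral_of_le hab,
    intervalIntegral.integral_eq_sub_of_hasDerivAt_of_le hab hcont hderiv
      ((intervalIntegrable_iff_integrableOn_Ioc_of_le hab).2 hint)]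

lemma lintegral_Ioi_ofReal_rpow_mul_exp_neg_mul {a b : ℝ} (ha : 0 < a) (hb : 0 < b) :
    ∫⁻ x in Ioi 0, ENNReal.ofReal (x ^ (a - 1) * exp (-(b * x)))
      = ENNReal.ofReal ((1 / b) ^ a * Gamma a) := by
  have hint : IntegrableOn (fun x : ℝ => x ^ (a - 1) * exp (-(b * x))) (Ioi 0) := by
    simpa [rpow_one] using
      integrableOn_rpow_mul_exp_neg_mul_rpow (s := a - 1) (by linarith) zero_lt_one hb
  rw [← ofReal_integral_eq_lintegral_ofReal hint, integral_rpow_mul_exp_neg_mul_Ioi ha hb]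
  exact (ae_restrict_iff' measurableSet_Ioi).2 (ae_of_all _ fun x hx => by
    have := rpow_nonneg (le_of_lt hx) (a - 1); positivity)

lemma hasDerivAt_rpow_mul_one_add_rpow_neg_two_mul {k v : ℝ} (hv : 0 < v) :
    HasDerivAt (fun v : ℝ => v ^ k * (1 + v) ^ (-(2 * k)))
      (k * ((1 - v) * v ^ (k - 1) * (1 + v) ^ (-(2 * k + 1)))) v := by
  have h1v : 0 < 1 + v := by linarith
  have hpow := (hasDerivAt_rpow_const (p := k) (Or.inl hv.ne')).mul
    ((hasDerivAt_rpow_const (p := -(2 * k)) (Or.inl h1v.ne')).comp v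
      ((hasDerivAt_id' v).const_add 1))
  refine hpow.congr_deriv ?_
  have hvk : v ^ k = v ^ (k - 1) * v := by rw [← rpow_add_one hv.ne']; ring_nf
  have h1vk : (1 + v) ^ (-(2 * k)) = (1 + v) ^ (-(2 * k + 1)) * (1 + v) := by
    rw [← rpow_add_one h1v.ne']; ring_nf
  simp only [Function.comp_apply]
  rw [hvk, h1vk, show -(2 * k) - 1 = -(2 * k + 1) by ring]
  ring

lemma lintegral_Ioo_ofReal_mul_rpow_mul_one_add_rpow {k : ℝ} (hk : 0 < k) :
    ∫⁻ v in Ioo 0 1, ENNReal.ofReal (k * ((1 - v) * v ^ (k - 1) * (1 + v) ^ (-(2 * k + 1))))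
      = ENNReal.ofReal (2 ^ (-(2 * k))) := by
  have hcont : ContinuousOn (fun v : ℝ => v ^ k * (1 + v) ^ (-(2 * k))) (Icc 0 1) := by
    refine ContinuousOn.mul
      (fun v _ => (continuousAt_rpow_const v k (Or.inr hk.le)).continuousWithinAt)
      (fun v hv => ContinuousWithinAt.rpow_const (by fun_prop) (Or.inl ?_))
    linarith [hv.1]
  rw [lintegral_Ioo_ofReal_deriv_of_nonneg zero_le_one hcont
    (fun v hv => hasDerivAt_rpow_mul_one_add_rpow_neg_two_mul hv.1) (fun v hv => ?_)]
  · norm_num [zero_rpow hk.ne']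
  · have := rpow_nonneg hv.1.le (k - 1)
    have := rpow_nonneg (by linarith [hv.1] : (0:ℝ) ≤ 1 + v) (-(2 * k + 1))
    have := sub_nonneg.2 hv.2.le
    positivity

lemma Gamma_two_mul_add_one_mul_two_rpow_neg {k : ℝ} (hk : 0 < k) :
    Gamma (2 * k + 1) * 2 ^ (-(2 * k)) = k * Gamma k * Gamma (k + 1 / 2) / √π := by
  have h2 : (2 : ℝ) ^ (1 - 2 * k) = 2 * 2 ^ (-(2 * k)) := by
    rw [sub_eq_add_neg, rpow_add two_pos, rpow_one]
  rw [Gamma_add_one (by positivity), mul_assoc k, Gamma_mul_Gamma_add_half_of_pos hk, h2]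
  field_simp

lemma Gamma_add_half_div_sqrt_pi_mul_Gamma_mul {k r : ℝ} (hk : 0 < k) (hr : 0 < r) :
    Gamma (k + 1 / 2) / (√π * Gamma k * r)
      = (r ^ k / Gamma k) ^ 2 * (1 / r) ^ (2 * k + 1) * Gamma (2 * k + 1) / k * 2 ^ (-(2 * k)) := by
  have hrpow : (r ^ k) ^ 2 * (1 / r) ^ (2 * k + 1) = 1 / r := by
    rw [one_div, inv_rpow hr.le, show 2 * k + 1 = k + k + 1 by ring, rpow_add_one hr.ne',
      rpow_add hr]
    field_simp
  have := Gamma_pos_of_pos hk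
  calc Gamma (k + 1 / 2) / (√π * Gamma k * r)
      = (r ^ k) ^ 2 * (1 / r) ^ (2 * k + 1) * (k * Gamma k * Gamma (k + 1 / 2) / √π)
          / (Gamma k ^ 2 * k) := by
        rw [hrpow]; field_simp
    _ = _ := by rw [← Gamma_two_mul_add_one_mul_two_rpow_neg hk]; ring

section GammaMeasure

instance (k r : ℝ) : SFinite (gammaMeasure k r) := by
  unfold gammaMeasure; infer_instance

lemma measurable_gammaPDF (k r : ℝ) : Measurable (gammaPDF k r) :=
  (measurable_gammaPDFReal k r).ennreal_ofReal

variable {k r : ℝ}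

lemma support_gammaPDF_mul_ofReal_sub_subset (x : ℝ) :
    Function.support (fun y => gammaPDF k r y * ENNReal.ofReal (x - y)) ⊆ Ico 0 x := by
  intro y hy
  by_contra hIco
  rcases lt_or_ge y 0 with hy0 | hy0
  · exact hy (by simp [gammaPDF_of_neg hy0])
  · exact hy (by simp [ENNReal.ofReal_of_nonpos (sub_nonpos.2 (not_lt.1 (hIco ⟨hy0, ·⟩)))])

lemma lintegral_ofReal_sub_gammaMeasure (x : ℝ) :
    ∫⁻ y, ENNReal.ofReal (x - y) ∂gammaMeasure k r
      = ∫⁻ y in Ico 0 x, gammaPDF k r y * ENNReal.ofReal (x - y) := by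
  rw [gammaMeasure, lintegral_withDensity_eq_lintegral_mul _ (measurable_gammaPDF k r)
    (by fun_prop), setLIntegral_eq_of_support_subset (support_gammaPDF_mul_ofReal_sub_subset x)]
  rfl

lemma gammaPDF_mul_gammaPDF_comp_mul_eq (hk : 0 < k) (hr : 0 < r) {x v : ℝ} (hx : 0 < x)
    (hv : v ∈ Ico (0 : ℝ) 1) :
    gammaPDF k r x * (ENNReal.ofReal x * (gammaPDF k r (x * v) * ENNReal.ofReal (x - x * v)))
      = ENNReal.ofReal ((r ^ k / Gamma k) ^ 2 * ((1 - v) * v ^ (k - 1)))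
          * ENNReal.ofReal (x ^ (2 * k + 1 - 1) * exp (-(r * (1 + v) * x))) := by
  obtain ⟨hv0, hv1⟩ := hv
  have := Gamma_pos_of_pos hk
  have := rpow_nonneg (mul_nonneg hx.le hv0) (k - 1)
  have := rpow_nonneg hv0 (k - 1)
  have := sub_nonneg.2 hv1.le
  have hx2k : x ^ (2 * k + 1 - 1) = x ^ (k - 1) * x ^ (k - 1) * x * x := by
    rw [← rpow_add hx, ← rpow_add_one hx.ne', ← rpow_add_one hx.ne']; ring_nf
  rw [gammaPDF_of_nonneg hx.le, gammaPDF_of_nonneg (by positivity),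
    ← ENNReal.ofReal_mul (by positivity), ← ENNReal.ofReal_mul hx.le,
    ← ENNReal.ofReal_mul (by positivity),
    ← ENNReal.ofReal_mul (by positivity)]
  congr 1
  rw [mul_rpow hx.le hv0, hx2k, show -(r * (1 + v) * x) = -(r * x) + -(r * (x * v)) by ring,
    exp_add]
  ring

lemma lintegral_lintegral_ofReal_sub_gammaMeasure_eq_setLIntegral_Ioi (hk : 0 < k) (hr : 0 < r) :
    ∫⁻ x, ∫⁻ y, ENNReal.ofReal (x - y) ∂gammaMeasure k r ∂gammaMeasure k r
      = ∫⁻ x in Ioi 0, ∫⁻ v in Ico 0 1,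
          ENNReal.ofReal ((r ^ k / Gamma k) ^ 2 * ((1 - v) * v ^ (k - 1)))
            * ENNReal.ofReal (x ^ (2 * k + 1 - 1) * exp (-(r * (1 + v) * x))) := by
  have hmeas : Measurable fun x => ∫⁻ y, ENNReal.ofReal (x - y) ∂gammaMeasure k r :=
    Measurable.lintegral_prod_right' (f := fun z : ℝ × ℝ => ENNReal.ofReal (z.1 - z.2))
      (by fun_prop)
  simp only [gammaMeasure] at hmeas ⊢
  rw [lintegral_withDensity_eq_lintegral_mul _ (measurable_gammaPDF k r) hmeas,
    ← setLIntegral_eq_of_support_subset (s := Ioi 0)]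
  · refine setLIntegral_congr_fun measurableSet_Ioi fun x hx => ?_
    rw [Pi.mul_apply, ← gammaMeasure, lintegral_ofReal_sub_gammaMeasure,
      setLIntegral_Ico_zero_eq_setLIntegral_comp_mul hx,
      ← lintegral_const_mul' (gammaPDF k r x) _ ENNReal.ofReal_ne_top]
    exact setLIntegral_congr_fun measurableSet_Ico fun v hv =>
      gammaPDF_mul_gammaPDF_comp_mul_eq hk hr hx hv
  · intro x hx
    by_contra hx0
    refine hx ?_
    rw [Pi.mul_apply, ← gammaMeasure, lintegral_ofReal_sub_gammaMeasure,
      Ico_eq_empty (by simpa using hx0), Measure.restrict_empty, lintegral_zero_measure, mul_zero]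

lemma setLIntegral_Ioi_ofReal_mul_ofReal_rpow_mul_exp (hk : 0 < k) (hr : 0 < r) {v : ℝ}
    (hv : v ∈ Ico (0 : ℝ) 1) :
    ∫⁻ x in Ioi 0, ENNReal.ofReal ((r ^ k / Gamma k) ^ 2 * ((1 - v) * v ^ (k - 1)))
        * ENNReal.ofReal (x ^ (2 * k + 1 - 1) * exp (-(r * (1 + v) * x)))
      = ENNReal.ofReal ((r ^ k / Gamma k) ^ 2 * (1 / r) ^ (2 * k + 1) * Gamma (2 * k + 1) / k)
          * ENNReal.ofReal (k * ((1 - v) * v ^ (k - 1) * (1 + v) ^ (-(2 * k + 1)))) := by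
  obtain ⟨hv0, hv1⟩ := hv
  have hpow : (1 / (r * (1 + v))) ^ (2 * k + 1)
      = (1 / r) ^ (2 * k + 1) * (1 + v) ^ (-(2 * k + 1)) := by
    rw [← div_div, div_eq_mul_inv, mul_rpow (by positivity) (by positivity),
      inv_rpow (by positivity), rpow_neg (by positivity)]
  have := rpow_nonneg hv0 (k - 1)
  have := Gamma_pos_of_pos hk
  have := sub_nonneg.2 hv1.le
  rw [lintegral_const_mul' _ _ ENNReal.ofReal_ne_top,
    lintegral_Ioi_ofReal_rpow_mul_exp_neg_mul (by positivity) (by positivity),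
    ← ENNReal.ofReal_mul (by positivity), ← ENNReal.ofReal_mul (by positivity), hpow]
  congr 1
  field_simp

theorem lintegral_lintegral_ofReal_sub_gammaMeasure (hk : 0 < k) (hr : 0 < r) :
    ∫⁻ x, ∫⁻ y, ENNReal.ofReal (x - y) ∂gammaMeasure k r ∂gammaMeasure k r
      = ENNReal.ofReal (Gamma (k + 1 / 2) / (√π * Gamma k * r)) := by
  set E := (r ^ k / Gamma k) ^ 2 * (1 / r) ^ (2 * k + 1) * Gamma (2 * k + 1) / k
  have hE : 0 ≤ E := by have := Gamma_pos_of_pos hk; positivity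
  calc ∫⁻ x, ∫⁻ y, ENNReal.ofReal (x - y) ∂gammaMeasure k r ∂gammaMeasure k r
      = ∫⁻ v in Ico 0 1, ∫⁻ x in Ioi 0,
          ENNReal.ofReal ((r ^ k / Gamma k) ^ 2 * ((1 - v) * v ^ (k - 1)))
            * ENNReal.ofReal (x ^ (2 * k + 1 - 1) * exp (-(r * (1 + v) * x))) := by
        rw [lintegral_lintegral_ofReal_sub_gammaMeasure_eq_setLIntegral_Ioi hk hr]
        exact lintegral_lintegral_swap (by fun_prop)
    _ = ∫⁻ v in Ioo 0 1, ENNReal.ofReal E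
          * ENNReal.ofReal (k * ((1 - v) * v ^ (k - 1) * (1 + v) ^ (-(2 * k + 1)))) := by
        rw [setLIntegral_congr Ioo_ae_eq_Ico.symm]
        exact setLIntegral_congr_fun measurableSet_Ioo fun v hv =>
          setLIntegral_Ioi_ofReal_mul_ofReal_rpow_mul_exp hk hr (Ioo_subset_Ico_self hv)
    _ = ENNReal.ofReal (Gamma (k + 1 / 2) / (√π * Gamma k * r)) := by
        rw [lintegral_const_mul' _ _ ENNReal.ofReal_ne_top,
          lintegral_Ioo_ofReal_mul_rpow_mul_one_add_rpow hk, ← ENNReal.ofReal_mul hE,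
          Gamma_add_half_div_sqrt_pi_mul_Gamma_mul hk hr]

theorem integral_abs_sub_gammaMeasure_prod (hk : 0 < k) (hr : 0 < r) :
    ∫ z, |z.1 - z.2| ∂(gammaMeasure k r).prod (gammaMeasure k r)
      = 2 * Gamma (k + 1 / 2) / (√π * Gamma k * r) := by
  have := Gamma_pos_of_pos hk
  rw [integral_eq_lintegral_of_nonneg_ae (ae_of_all _ fun _ => abs_nonneg _) (by fun_prop),
    lintegral_prod_ofReal_abs_sub, lintegral_lintegral_ofReal_sub_gammaMeasure hk hr,
    ENNReal.toReal_mul, ENNReal.toReal_ofReal (by positivity)]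
  simp only [ENNReal.toReal_ofNat]
  ring

end GammaMeasure

/-- For independent `G₁, G₂` gamma distributed with shape `1/n` and scale `λ`
(rate `1/λ`), `E|G₁ - G₂| = 2λ / B(1/2, 1/n)`, where `B` is the beta function. -/
theorem abs_gamma_diff_mean (n : ℕ) (hn : 1 ≤ n) (lam : ℝ) (hlam : 0 < lam) :
    ∫ p : ℝ × ℝ, |p.1 - p.2|
        ∂((gammaMeasure (1 / (n : ℝ)) (1 / lam)).prod (gammaMeasure (1 / (n : ℝ)) (1 / lam)))
      = 2 * lam /
          (Real.Gamma (1 / 2) * Real.Gamma (1 / (n : ℝ)) / Real.Gamma (1 / 2 + 1 / (n : ℝ))) := by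
  have hk : 0 < 1 / (n : ℝ) := one_div_pos.2 (Nat.cast_pos.2 hn)
  rw [integral_abs_sub_gammaMeasure_prod hk (one_div_pos.2 hlam), Gamma_one_half_eq,
    add_comm (1 / 2 : ℝ)]
  have := Gamma_pos_of_pos hk
  have := Gamma_pos_of_pos (add_pos hk one_half_pos)
  field_simp
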